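/- arXiv:2310.04851 — 2 statements merged into one kernel-verified Lean document; each statement's English description precedes it below -/
import Mathlib

section
/- Let G and H be connected finite simple graphs with n₁ and n₂ vertices respectively. Then the star chromatic number of their tensor product satisfies χ_s(G × H) ≤ min{n₁ · χ_s(H), n₂ · χ_s(G)}. -/
/-- The tensor (categorical) product of two simple graphs: `(u,v)` and `(u',v')` are
adjacent iff `u` is adjacent to `u'` in `G` and `v` is adjacent to `v'` in `H`. -/
def SimpleGraph.tensorProd {α β : Type*} (G : SimpleGraph α) (H : SimpleGraph β) :
    SimpleGraph (α × β) where
  Adj x y := G.Adj x.1 y.1 ∧ H.Adj x.2 y.2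
  symm := ⟨fun _ _ h => ⟨h.1.symm, h.2.symm⟩⟩
  loopless := ⟨fun x h => G.irrefl h.1⟩

/-- A star coloring of `G` with colors in `Fin n`: a proper coloring such that every
path on four vertices (i.e. of length three) uses at least three distinct colors. -/
def SimpleGraph.IsStarColoring {α : Type*} (G : SimpleGraph α) {n : ℕ} (f : α → Fin n) : Prop :=
  (∀ ⦃u v : α⦄, G.Adj u v → f u ≠ f v) ∧
  ∀ (u v : α) (p : G.Walk u v), p.IsPath → p.length = 3 →
    3 ≤ (p.support.map f).toFinset.card

/-- The star chromatic number of `G`: the least number of colors in a star coloring. -/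
noncomputable def SimpleGraph.starChromaticNumber {α : Type*} (G : SimpleGraph α) : ℕ :=
  sInf {n : ℕ | ∃ f : α → Fin n, G.IsStarColoring f}

/-!
Colour `(u, v)` by the pair `(u, f v)`, where `f` is an optimal star colouring of `H`; this uses
`|V(G)| · χ_s(H)` colours and is proper because `f` is. If a path `x₀x₁x₂x₃` of the product were
bicoloured, then `x₀, x₂` (and `x₁, x₃`) would share their `G`-coordinates, hence have distinct
`H`-coordinates, so the `H`-coordinates would form a path in `H` bicoloured by `f`. The other
bound follows by the symmetry `G × H ≅ H × G`.
-/

theorem List.three_le_card_toFinset_iff {γ : Type*} [DecidableEq γ] {x y z w : γ} (hxy : x ≠ y)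
    (hyz : y ≠ z) (hzw : z ≠ w) : 3 ≤ [x, y, z, w].toFinset.card ↔ x ≠ z ∨ y ≠ w := by
  by_cases hxz : x = z <;> by_cases hyw : y = w <;> by_cases hxw : x = w <;>
    simp_all [List.toFinset_cons, Finset.card_insert_of_notMem, eq_comm]

namespace SimpleGraph

variable {α β : Type*}

theorem Walk.exists_support_eq_of_length_eq_three {G : SimpleGraph α} {u v : α} (p : G.Walk u v)
    (hp : p.length = 3) :
    ∃ b c, G.Adj u b ∧ G.Adj b c ∧ G.Adj c v ∧ p.support = [u, b, c, v] := by
  match p, hp with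
  | .cons h₁ (.cons h₂ (.cons h₃ .nil)), _ => exact ⟨_, _, h₁, h₂, h₃, rfl⟩

theorem isStarColoring_iff {G : SimpleGraph α} {n : ℕ} {f : α → Fin n} :
    G.IsStarColoring f ↔ (∀ ⦃u v⦄, G.Adj u v → f u ≠ f v) ∧
      ∀ ⦃a b c d⦄, G.Adj a b → G.Adj b c → G.Adj c d → [a, b, c, d].Nodup →
        f a = f c → f b ≠ f d := by
  refine and_congr_right fun hproper => ⟨fun hstar a b c d hab hbc hcd hnd hac hbd => ?_,
    fun hP₄ u v p hp hlen => ?_⟩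
  · let p : G.Walk a d := .cons hab (.cons hbc (.cons hcd .nil))
    have := hstar a d p (Walk.isPath_def _ |>.mpr hnd) rfl
    rw [show p.support.map f = [f a, f b, f c, f d] from rfl,
      List.three_le_card_toFinset_iff (hproper hab) (hproper hbc) (hproper hcd)] at this
    exact this.elim (· hac) (· hbd)
  · obtain ⟨b, c, hub, hbc, hcv, hsupp⟩ := p.exists_support_eq_of_length_eq_three hlen
    have hnd : [u, b, c, v].Nodup := hsupp ▸ hp.support_nodup
    rw [hsupp, List.map_cons, List.map_cons, List.map_cons, List.map_singleton,
      List.three_le_card_toFinset_iff (hproper hub) (hproper hbc) (hproper hcv),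
      or_iff_not_imp_left, not_not]
    exact hP₄ hub hbc hcv hnd

theorem IsStarColoring.comp_embedding {G : SimpleGraph α} {G' : SimpleGraph β} {n : ℕ}
    {f : β → Fin n} (hf : G'.IsStarColoring f) (e : G ↪g G') : G.IsStarColoring (f ∘ e) := by
  rw [isStarColoring_iff] at hf ⊢
  refine ⟨fun u v huv => hf.1 (e.map_adj_iff.mpr huv), fun a b c d hab hbc hcd hnd => ?_⟩
  exact hf.2 (e.map_adj_iff.mpr hab) (e.map_adj_iff.mpr hbc) (e.map_adj_iff.mpr hcd)
    (hnd.map e.injective)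

def tensorProdComm (G : SimpleGraph α) (H : SimpleGraph β) :
    G.tensorProd H ≃g H.tensorProd G where
  toEquiv := Equiv.prodComm α β
  map_rel_iff' := and_comm

theorem IsStarColoring.tensorProd {G : SimpleGraph α} {H : SimpleGraph β} {m n : ℕ}
    {e : α → Fin m} (he : Function.Injective e) {f : β → Fin n} (hf : H.IsStarColoring f) :
    (G.tensorProd H).IsStarColoring fun x => finProdFinEquiv (e x.1, f x.2) := by
  have hcolor {x y : α × β}
      (hxy : finProdFinEquiv (e x.1, f x.2) = finProdFinEquiv (e y.1, f y.2)) :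
      x.1 = y.1 ∧ f x.2 = f y.2 := by
    simpa [he.eq_iff] using hxy
  rw [isStarColoring_iff] at hf ⊢
  refine ⟨fun x y hxy hc => hf.1 hxy.2 (hcolor hc).2, fun a b c d hab hbc hcd hnd hac hbd => ?_⟩
  obtain ⟨hac₁, hfac⟩ := hcolor hac
  obtain ⟨hbd₁, hfbd⟩ := hcolor hbd
  have had : f a.2 ≠ f d.2 := hfac ▸ hf.1 hcd.2
  refine hf.2 hab.2 hbc.2 hcd.2 ?_ hfac hfbd
  simp only [List.nodup_cons, List.mem_cons, List.not_mem_nil, or_false, not_or, Prod.ext_iff]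
    at hnd ⊢
  grind [hab.2.ne, hbc.2.ne, hcd.2.ne]

theorem starChromaticNumber_le_of_isStarColoring {G : SimpleGraph α} {n : ℕ} {f : α → Fin n}
    (hf : G.IsStarColoring f) : G.starChromaticNumber ≤ n :=
  Nat.sInf_le ⟨f, hf⟩

theorem isStarColoring_of_injective (G : SimpleGraph α) {n : ℕ} {f : α → Fin n}
    (hf : Function.Injective f) : G.IsStarColoring f := by
  rw [isStarColoring_iff]
  exact ⟨fun u v huv => hf.ne huv.ne, fun a b c d _ _ _ hnd hac => absurd (hf hac) (by grind)⟩

theorem exists_isStarColoring_starChromaticNumber [Finite α] (G : SimpleGraph α) :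
    ∃ f : α → Fin G.starChromaticNumber, G.IsStarColoring f :=
  Nat.sInf_mem (s := {n | ∃ f : α → Fin n, G.IsStarColoring f})
    ⟨Nat.card α, Finite.equivFin α, G.isStarColoring_of_injective (Finite.equivFin α).injective⟩

end SimpleGraph

open SimpleGraph

theorem starChromaticNumber_tensorProd_le_general
    {α β : Type*} [Fintype α] [Fintype β] (G : SimpleGraph α) (H : SimpleGraph β) :
    (G.tensorProd H).starChromaticNumber ≤
      min (Fintype.card α * H.starChromaticNumber) (Fintype.card β * G.starChromaticNumber) := by
  obtain ⟨fG, hfG⟩ := G.exists_isStarColoring_starChromaticNumber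
  obtain ⟨fH, hfH⟩ := H.exists_isStarColoring_starChromaticNumber
  refine le_min ?_ ?_
  · exact starChromaticNumber_le_of_isStarColoring
      (hfH.tensorProd (G := G) (Fintype.equivFin α).injective)
  · exact starChromaticNumber_le_of_isStarColoring
      ((hfG.tensorProd (G := H) (Fintype.equivFin β).injective).comp_embedding
        (tensorProdComm G H).toEmbedding)

theorem starChromaticNumber_tensorProd_le
    {α β : Type*} [Fintype α] [Fintype β] (G : SimpleGraph α) (H : SimpleGraph β)
    (hG : G.Connected) (hH : H.Connected) :
    (G.tensorProd H).starChromaticNumber ≤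
      min (Fintype.card α * H.starChromaticNumber) (Fintype.card β * G.starChromaticNumber) :=
  starChromaticNumber_tensorProd_le_general G H
end

section
/- For every integer m ≥ 3, the star chromatic number of the tensor product of the cycle C_m with the path P_2 satisfies χ_s(C_m × P_2) = 3. -/
open SimpleGraph

/-!
`C_m × K_2` is the bipartite double cover of `C_m`, so its projection onto `C_m` is a locally
injective homomorphism, and star colorings pull back along those. The cycle `C_n` has a star
`3`-coloring for every `n ≥ 3` except `n = 5`: periods `3`, `4` and `8` are checked directly,
and appending a copy of its first three (distinct) colors to the period of a star coloring of
`C_n` gives one of `C_{n+3}`. For `m = 5` one uses `C_5 × K_2 ≅ C_10` instead. Three colors are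
necessary because `C_m × K_2` contains a path on four vertices.
-/

open Function

theorem three_le_card_iff_not_alternating {α : Type*} [DecidableEq α] {a b c d : α}
    (hab : a ≠ b) (hbc : b ≠ c) (hcd : c ≠ d) :
    3 ≤ ({a, b, c, d} : Finset α).card ↔ ¬(a = c ∧ b = d) := by
  constructor
  · rintro h ⟨rfl, rfl⟩
    have : ({a, b, a, b} : Finset α) = {a, b} := by ext; simp
    rw [this] at h
    exact absurd (Finset.card_le_two.trans_lt' h) (by norm_num)
  · intro h
    by_cases hac : a = c
    · have hbd : b ≠ d := fun hbd => h ⟨hac, hbd⟩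
      calc 3 = ({b, c, d} : Finset α).card :=
            (Finset.card_eq_three.2 ⟨b, c, d, hbc, hbd, hcd, rfl⟩).symm
        _ ≤ _ := Finset.card_le_card (Finset.subset_insert a _)
    · calc 3 = ({a, b, c} : Finset α).card :=
            (Finset.card_eq_three.2 ⟨a, b, c, hab, hac, hbc, rfl⟩).symm
        _ ≤ _ := Finset.card_le_card
          (Finset.insert_subset_insert a (Finset.insert_subset_insert b (by simp)))

namespace SimpleGraph

variable {α β : Type*} {G : SimpleGraph α} {H : SimpleGraph β} {k : ℕ} {f : β → Fin k}

theorem isStarColoring_iff_s16 :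
    H.IsStarColoring f ↔ (∀ ⦃u v⦄, H.Adj u v → f u ≠ f v) ∧
      ∀ ⦃w x y z⦄, H.Adj w x → H.Adj x y → H.Adj y z → w ≠ y → x ≠ z →
        ¬(f w = f y ∧ f x = f z) := by
  refine and_congr_right fun hproper => ⟨fun hpath w x y z hwx hxy hyz hwy hxz => ?_, ?_⟩
  · rintro ⟨hfwy, hfxz⟩
    obtain rfl | hwz := eq_or_ne w z
    · exact hproper hyz.symm hfwy
    have hp : (Walk.cons hwx (Walk.cons hxy (Walk.cons hyz Walk.nil))).IsPath := by
      simp [Walk.isPath_def, hwx.ne, hxy.ne, hyz.ne, hwy, hwz, hxz]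
    have hcard := hpath _ _ _ hp rfl
    simp only [Walk.support_cons, Walk.support_nil, List.map_cons, List.map_nil,
      List.toFinset_cons, List.toFinset_nil, LawfulSingleton.insert_empty_eq] at hcard
    exact (three_le_card_iff_not_alternating (hproper hwx) (hproper hxy) (hproper hyz)).1
      hcard ⟨hfwy, hfxz⟩
  · intro h4 u v p hp hlen
    match p, hp, hlen with
    | .cons hwx (.cons hxy (.cons hyz .nil)), hp, _ =>
      simp only [Walk.isPath_def, Walk.support_cons, Walk.support_nil, List.nodup_cons,
        List.mem_cons, List.not_mem_nil] at hp
      simp only [Walk.support_cons, Walk.support_nil, List.map_cons, List.map_nil,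
        List.toFinset_cons, List.toFinset_nil, LawfulSingleton.insert_empty_eq]
      exact (three_le_card_iff_not_alternating (hproper hwx) (hproper hxy) (hproper hyz)).2
        (h4 hwx hxy hyz (by tauto) (by tauto))

theorem IsStarColoring.three_le (hf : H.IsStarColoring f) {u v : β} {p : H.Walk u v}
    (hp : p.IsPath) (hlen : p.length = 3) : 3 ≤ k :=
  (hf.2 u v p hp hlen).trans ((Finset.card_le_univ _).trans_eq (Fintype.card_fin k))

theorem IsStarColoring.comp (hf : H.IsStarColoring f) (φ : G →g H)
    (hφ : ∀ ⦃x y z⦄, G.Adj x y → G.Adj x z → φ y = φ z → y = z) :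
    G.IsStarColoring (f ∘ φ) := by
  obtain ⟨hproper, h4⟩ := isStarColoring_iff_s16.1 hf
  refine isStarColoring_iff_s16.2 ⟨fun u v h => hproper (φ.map_adj h), ?_⟩
  intro w x y z hwx hxy hyz hwy hxz
  exact h4 (φ.map_adj hwx) (φ.map_adj hxy) (φ.map_adj hyz)
    (fun h => hwy (hφ hwx.symm hxy h)) (fun h => hxz (hφ hxy.symm hyz h))

theorem starChromaticNumber_eq_three (h3 : ∃ f : β → Fin 3, H.IsStarColoring f)
    (hpath : ∃ (u v : β) (p : H.Walk u v), p.IsPath ∧ p.length = 3) :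
    H.starChromaticNumber = 3 := by
  obtain ⟨u, v, p, hp, hlen⟩ := hpath
  refine le_antisymm (Nat.sInf_le h3) (le_csInf ⟨3, h3⟩ ?_)
  rintro n ⟨f, hf⟩
  exact hf.three_le hp hlen

end SimpleGraph

def IsStarSeq {α : Type*} (s : ℕ → α) : Prop :=
  ∀ i, s i ≠ s (i + 1) ∧ ¬(s i = s (i + 2) ∧ s (i + 1) = s (i + 3))

section IsStarSeq

variable {α : Type*} {s : ℕ → α} {n : ℕ}

theorem isStarSeq_mod_three (h01 : s 0 ≠ s 1) (h12 : s 1 ≠ s 2) (h02 : s 0 ≠ s 2) :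
    IsStarSeq (fun i => s (i % 3)) := by
  intro i
  have : i % 3 < 3 := Nat.mod_lt i (by norm_num)
  interval_cases h : i % 3 <;> simp_all [Nat.add_mod, h01.symm, h02.symm, h12.symm]

/-- One period of the new sequence is one period of `s` followed by `s 0, s 1, s 2`. -/
theorem IsStarSeq.mod_add_three (hs : IsStarSeq s) (hper : Periodic s n)
    (h01 : s 0 ≠ s 1) (h12 : s 1 ≠ s 2) (h02 : s 0 ≠ s 2) :
    IsStarSeq (fun i => s (i % (n + 3))) := by
  intro i
  simp only [← Nat.mod_add_mod i (n + 3)]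
  have hr : i % (n + 3) < n + 3 := Nat.mod_lt i (by omega)
  generalize i % (n + 3) = r at hr ⊢
  rcases lt_or_ge r n with hrn | hnr
  · have hin : ∀ k ≤ 3, (r + k) % (n + 3) = r + k := fun k hk => Nat.mod_eq_of_lt (by omega)
    simpa only [hin 1 (by norm_num), hin 2 (by norm_num), hin 3 (by norm_num)] using hs r
  · have hwrap : ∀ k ≤ 3, s ((r + k) % (n + 3)) = s ((r - n + k) % 3) := by
      intro k hk
      rcases lt_or_ge (r - n + k) 3 with h | h
      · rw [Nat.mod_eq_of_lt h, Nat.mod_eq_of_lt (show r + k < n + 3 by omega),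
          show r + k = r - n + k + n by omega, hper]
      · rw [Nat.mod_eq_sub_mod h, Nat.mod_eq_of_lt (show r - n + k - 3 < 3 by omega),
          Nat.mod_eq_sub_mod (show n + 3 ≤ r + k by omega),
          Nat.mod_eq_of_lt (show r + k - (n + 3) < n + 3 by omega)]
        congr 1
        omega
    have h0 : s r = s ((r - n) % 3) := by simpa [Nat.mod_eq_of_lt hr] using hwrap 0 (by norm_num)
    simpa only [h0, hwrap 1 (by norm_num), hwrap 2 (by norm_num), hwrap 3 (by norm_num),
      Nat.add_zero, Nat.add_assoc] using isStarSeq_mod_three h01 h12 h02 (r - n)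

end IsStarSeq

open Fin.NatCast in
theorem exists_periodic_isStarSeq_of_fin {n : ℕ} [NeZero n] (v : Fin n → Fin 3)
    (h : ∀ i : Fin n, v i ≠ v (i + 1) ∧ ¬(v i = v (i + 2) ∧ v (i + 1) = v (i + 3)))
    (h01 : v 0 ≠ v 1) (h12 : v 1 ≠ v 2) (h02 : v 0 ≠ v 2) :
    ∃ s : ℕ → Fin 3, Periodic s n ∧ IsStarSeq s ∧ s 0 ≠ s 1 ∧ s 1 ≠ s 2 ∧ s 0 ≠ s 2 :=
  ⟨fun i => v i, fun i => by simp,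
    fun i => by simpa only [Nat.cast_add, Nat.cast_one, Nat.cast_ofNat] using h i,
    by simpa using h01, by simpa using h12, by simpa using h02⟩

theorem exists_periodic_isStarSeq {n : ℕ} (hn : 3 ≤ n) (h5 : n ≠ 5) :
    ∃ s : ℕ → Fin 3, Periodic s n ∧ IsStarSeq s ∧ s 0 ≠ s 1 ∧ s 1 ≠ s 2 ∧ s 0 ≠ s 2 := by
  induction n using Nat.strong_induction_on with
  | _ n ih =>
    rcases (show n = 3 ∨ n = 4 ∨ n = 8 ∨ (3 ≤ n - 3 ∧ n - 3 ≠ 5) by omega)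
      with rfl | rfl | rfl | hn'
    · exact exists_periodic_isStarSeq_of_fin ![0, 1, 2]
        (by decide) (by decide) (by decide) (by decide)
    · exact exists_periodic_isStarSeq_of_fin ![0, 1, 2, 1]
        (by decide) (by decide) (by decide) (by decide)
    · exact exists_periodic_isStarSeq_of_fin ![0, 1, 2, 0, 1, 0, 2, 1]
        (by decide) (by decide) (by decide) (by decide)
    · obtain ⟨s, hper, hs, h01, h12, h02⟩ := ih (n - 3) (by omega) hn'.1 hn'.2
      obtain ⟨m, rfl⟩ : ∃ m, n = m + 3 := ⟨n - 3, by omega⟩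
      simp only [Nat.add_sub_cancel] at hper
      have hmod : ∀ i < 3, s (i % (m + 3)) = s i := fun i hi => by
        rw [Nat.mod_eq_of_lt (by omega)]
      refine ⟨fun i => s (i % (m + 3)), fun i => by simp, hs.mod_add_three hper h01 h12 h02, ?_⟩
      simp only [hmod 0 (by norm_num), hmod 1 (by norm_num), hmod 2 (by norm_num)]
      exact ⟨h01, h12, h02⟩

namespace SimpleGraph

variable {α β : Type*}

theorem cycleGraph_adj_iff_eq_add_one {n : ℕ} {u v : Fin (n + 2)} :
    (cycleGraph (n + 2)).Adj u v ↔ v = u + 1 ∨ u = v + 1 := by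
  rw [cycleGraph_adj, sub_eq_iff_eq_add, sub_eq_iff_eq_add, add_comm 1 v, add_comm 1 u, or_comm]

theorem isStarColoring_cycleGraph_of_isStarSeq {k n : ℕ} {s : ℕ → Fin k} (hper : Periodic s n)
    (hs : IsStarSeq s) : (cycleGraph n).IsStarColoring (fun i => s i) := by
  match n, hper with
  | 0, _ => exact isStarColoring_iff_s16.2 ⟨fun u => u.elim0, fun w => w.elim0⟩
  | 1, _ => exact isStarColoring_iff_s16.2 ⟨fun _ _ h => (cycleGraph_one_adj h).elim,
      fun _ _ _ _ h => (cycleGraph_one_adj h).elim⟩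
  | n + 2, hper =>
    have hadd : ∀ (u : Fin (n + 2)) (j : ℕ), s (↑(u + 1) + j) = s (↑u + (1 + j)) := fun u j => by
      rw [Fin.val_add, Fin.val_one, ← hper.map_mod_nat, Nat.mod_add_mod, hper.map_mod_nat,
        Nat.add_assoc]
    have hsucc : ∀ u : Fin (n + 2), s ↑(u + 1) = s (↑u + 1) := fun u => hadd u 0
    have hproper : ∀ u : Fin (n + 2), s u ≠ s ↑(u + 1) := fun u => by
      simpa only [hsucc] using (hs u).1
    have hwindow : ∀ u : Fin (n + 2),
        ¬(s u = s ↑(u + 1 + 1) ∧ s ↑(u + 1) = s ↑(u + 1 + 1 + 1)) :=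
      fun u => by simpa only [hsucc, hadd, Nat.reduceAdd] using (hs u).2
    refine isStarColoring_iff_s16.2 ⟨fun u v huv => ?_, fun w x y z hwx hxy hyz hwy hxz => ?_⟩
    · rcases cycleGraph_adj_iff_eq_add_one.1 huv with rfl | rfl
      exacts [hproper u, (hproper v).symm]
    simp only [cycleGraph_adj_iff_eq_add_one] at hwx hxy hyz
    rcases hwx with rfl | rfl
    · obtain rfl : y = w + 1 + 1 := hxy.resolve_right fun h => hwy (add_right_cancel h)
      obtain rfl : z = w + 1 + 1 + 1 := hyz.resolve_right fun h => hxz (add_right_cancel h)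
      exact hwindow w
    · obtain rfl : x = y + 1 := hxy.resolve_left fun h => hwy h.symm
      obtain rfl : y = z + 1 := hyz.resolve_left fun h => hxz h.symm
      exact fun h => hwindow z ⟨h.2.symm, h.1.symm⟩

instance {G : SimpleGraph α} {H : SimpleGraph β} [DecidableRel G.Adj] [DecidableRel H.Adj] :
    DecidableRel (G.tensorProd H).Adj :=
  fun _ _ => inferInstanceAs (Decidable (_ ∧ _))

def tensorProd.fst (G : SimpleGraph α) (H : SimpleGraph β) : G.tensorProd H →g G :=
  ⟨Prod.fst, fun h => h.1⟩

theorem tensorProd.fst_locally_injective {G : SimpleGraph α} {H : SimpleGraph β}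
    (hH : ∀ ⦃b c d⦄, H.Adj b c → H.Adj b d → c = d) ⦃x y z : α × β⦄
    (hxy : (G.tensorProd H).Adj x y) (hxz : (G.tensorProd H).Adj x z)
    (h : tensorProd.fst G H y = tensorProd.fst G H z) : y = z :=
  Prod.ext h (hH hxy.2 hxz.2)

theorem top_fin_two_adj_unique ⦃b c d : Fin 2⦄ (hc : (⊤ : SimpleGraph (Fin 2)).Adj b c)
    (hd : (⊤ : SimpleGraph (Fin 2)).Adj b d) : c = d := by
  revert b c d
  decide

/-- `(i, a) ↦` the residue mod `10` that is `i` mod `5` and `a` mod `2`. -/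
def cycleGraphFiveTensorProdHom : (cycleGraph 5).tensorProd (⊤ : SimpleGraph (Fin 2)) →g
    cycleGraph 10 :=
  ⟨fun x => ⟨x.1 + 5 * ((x.1 + x.2) % 2), by omega⟩, by decide⟩

theorem cycleGraphFiveTensorProdHom_injective : Injective cycleGraphFiveTensorProdHom := by
  decide

theorem exists_isStarColoring_cycleGraph_tensorProd {m : ℕ} (hm : 3 ≤ m) :
    ∃ f : Fin m × Fin 2 → Fin 3,
      ((cycleGraph m).tensorProd (⊤ : SimpleGraph (Fin 2))).IsStarColoring f := by
  obtain rfl | h5 := eq_or_ne m 5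
  · obtain ⟨s, hper, hs, -⟩ := exists_periodic_isStarSeq (n := 10) (by norm_num) (by norm_num)
    exact ⟨_, (isStarColoring_cycleGraph_of_isStarSeq hper hs).comp cycleGraphFiveTensorProdHom
      fun _ _ _ _ _ h => cycleGraphFiveTensorProdHom_injective h⟩
  · obtain ⟨s, hper, hs, -⟩ := exists_periodic_isStarSeq hm h5
    exact ⟨_, (isStarColoring_cycleGraph_of_isStarSeq hper hs).comp (tensorProd.fst _ _)
      (tensorProd.fst_locally_injective top_fin_two_adj_unique)⟩

theorem exists_isPath_cycleGraph_tensorProd {m : ℕ} (hm : 3 ≤ m) :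
    ∃ (u v : Fin m × Fin 2)
      (p : ((cycleGraph m).tensorProd (⊤ : SimpleGraph (Fin 2))).Walk u v),
      p.IsPath ∧ p.length = 3 := by
  obtain ⟨k, rfl⟩ : ∃ k, m = k + 3 := ⟨m - 3, by omega⟩
  have hadj : ∀ (i : Fin (k + 3)) (a b : Fin 2), a ≠ b →
      ((cycleGraph (k + 3)).tensorProd (⊤ : SimpleGraph (Fin 2))).Adj (i, a) (i + 1, b) :=
    fun i a b hab => ⟨cycleGraph_adj_iff_eq_add_one.2 (Or.inl rfl), hab⟩
  refine ⟨_, _, .cons (hadj 0 0 1 (by decide)) (.cons (hadj _ 1 0 (by decide))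
    (.cons (hadj _ 0 1 (by decide)) .nil)), ?_, rfl⟩
  have h2 : 2 % (k + 3) = 2 := Nat.mod_eq_of_lt (by omega)
  simp [Walk.isPath_def, Fin.ext_iff, Fin.val_add, h2]

end SimpleGraph

theorem starChromaticNumber_Cm_tensorProd_P2 (m : ℕ) (hm : 3 ≤ m) :
    ((cycleGraph m).tensorProd (pathGraph 2)).starChromaticNumber = 3 := by
  rw [pathGraph_two_eq_top]
  exact starChromaticNumber_eq_three (exists_isStarColoring_cycleGraph_tensorProd hm)
    (exists_isPath_cycleGraph_tensorProd hm)
end
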